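/- Let H_1, H_2 be complex Hilbert spaces, S ∈ L(H_1), T ∈ L(H_2), and consider S ⊗ I and I ⊗ T on the Hilbert space tensor product H_1 ⊗ H_2. If λ ∈ σ_δ(S) and μ ∈ σ_δ(T) (i.e., R(S−λ) ≠ H_1 and R(T−μ) ≠ H_2), then R((S−λ)⊗I) + R(I⊗(T−μ)) ≠ H_1 ⊗ H_2, i.e., (λ,μ) ∈ σ_δ(S⊗I, I⊗T). -/

import Mathlib

noncomputable section

open ContinuousLinearMap in
/-- If the Hilbert adjoint of `A` is bounded below, then `A` is surjective. -/
lemma aux_surj_of_adjoint_lowerbound {H : Type*} [NormedAddCommGroup H]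
    [InnerProductSpace ℂ H] [CompleteSpace H]
    (A : H →L[ℂ] H) (c : ℝ) (hc : 0 < c)
    (h : ∀ v, c * ‖v‖ ≤ ‖adjoint A v‖) :
    LinearMap.range (A : H →ₗ[ℂ] H) = ⊤ := by
  set P : H →L[ℂ] H := A.comp (adjoint A) with hPdef
  have hinner : ∀ v : H, (inner ℂ (P v) v : ℂ)
      = inner ℂ (adjoint A v) (adjoint A v) := by
    intro v
    simpa [hPdef] using (adjoint_inner_right A (adjoint A v) v).symm
  have hnorm : ∀ v, c ^ 2 * ‖v‖ ≤ ‖P v‖ := by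
    intro v
    rcases eq_or_ne v 0 with rfl | hv
    · simp
    · have hv' : 0 < ‖v‖ := norm_pos_iff.2 hv
      have h1 : ‖adjoint A v‖ ^ 2 ≤ ‖P v‖ * ‖v‖ := by
        have h2 := norm_inner_le_norm (𝕜 := ℂ) (P v) v
        have h3 : ‖(inner ℂ (P v) v : ℂ)‖ = ‖adjoint A v‖ ^ 2 := by
          rw [hinner v, inner_self_eq_norm_sq_to_K]
          simp
        linarith [h3 ▸ h2]
      have h4 : (c * ‖v‖) ^ 2 ≤ ‖adjoint A v‖ ^ 2 := by
        have h4a := h v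
        have h4b : 0 ≤ c * ‖v‖ := by positivity
        nlinarith [norm_nonneg (adjoint A v)]
      have h5 : c ^ 2 * ‖v‖ * ‖v‖ ≤ ‖P v‖ * ‖v‖ := by nlinarith
      exact le_of_mul_le_mul_right h5 hv'
  have hK : (0:ℝ) ≤ (c ^ 2)⁻¹ := by positivity
  have hanti : AntilipschitzWith ⟨(c ^ 2)⁻¹, hK⟩ P := by
    apply P.antilipschitz_of_bound
    intro x
    have := hnorm x
    have hc2 : (0:ℝ) < c ^ 2 := by positivity
    change ‖x‖ ≤ (c ^ 2)⁻¹ * ‖P x‖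
    rw [le_inv_mul_iff₀ hc2]
    exact hnorm x
  have hcl : IsClosed (Set.range P) := hanti.isClosed_range P.uniformContinuous
  have hclK : IsClosed ((LinearMap.range (P : H →ₗ[ℂ] H) : Submodule ℂ H) : Set H) := by
    rwa [LinearMap.coe_range]
  haveI : CompleteSpace (LinearMap.range (P : H →ₗ[ℂ] H) : Submodule ℂ H) := hclK.completeSpace_coe
  have horth : (LinearMap.range (P : H →ₗ[ℂ] H) : Submodule ℂ H)ᗮ = ⊥ := by
    rw [Submodule.eq_bot_iff]
    intro v hv
    have h0 : (inner ℂ (P v) v : ℂ) = 0 :=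
      (Submodule.mem_orthogonal _ _).1 hv (P v) (LinearMap.mem_range_self _ v)
    have h1 : adjoint A v = 0 := by
      rw [hinner v, inner_self_eq_zero] at h0
      exact h0
    have h2 := h v
    rw [h1, norm_zero] at h2
    have : ‖v‖ = 0 := by nlinarith [norm_nonneg v]
    exact norm_eq_zero.1 this
  have hrange : (LinearMap.range (P : H →ₗ[ℂ] H) : Submodule ℂ H) = ⊤ :=
    Submodule.orthogonal_eq_bot_iff.1 horth
  rw [eq_top_iff]
  intro y _
  have : y ∈ LinearMap.range (P : H →ₗ[ℂ] H) := hrange ▸ Submodule.mem_top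
  obtain ⟨v, hv⟩ := this
  exact ⟨adjoint A v, hv⟩

open ContinuousLinearMap in
/-- If `A` is not surjective, its adjoint is not bounded below. -/
lemma aux_small_adjoint {H : Type*} [NormedAddCommGroup H]
    [InnerProductSpace ℂ H] [CompleteSpace H]
    (A : H →L[ℂ] H) (hA : LinearMap.range (A : H →ₗ[ℂ] H) ≠ ⊤) (ε : ℝ) (hε : 0 < ε) :
    ∃ a : H, ‖a‖ = 1 ∧ ‖adjoint A a‖ < ε := by
  by_contra hcon
  push_neg at hcon
  apply hA
  apply aux_surj_of_adjoint_lowerbound A ε hε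
  intro v
  rcases eq_or_ne v 0 with rfl | hv
  · simp
  · have hv' : 0 < ‖v‖ := norm_pos_iff.2 hv
    have h1 : ‖(‖v‖⁻¹ : ℂ) • v‖ = 1 := by
      rw [norm_smul]
      simp [hv'.ne']
    have h2 := hcon ((‖v‖⁻¹ : ℂ) • v) h1
    rw [map_smul, norm_smul] at h2
    simp only [norm_inv, Complex.norm_real, norm_norm] at h2
    rw [le_inv_mul_iff₀ hv'] at h2
    linarith [h2]

set_option maxHeartbeats 1600000 in
/-- Let `H₁`, `H₂` be complex Hilbert spaces with Hilbert-space tensor product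
`Z = H₁ ⊗ H₂` (axiomatized by the Eschmeier conditions T1–T4). If `λ ∈ σ_δ(S)` and
`μ ∈ σ_δ(T)`, i.e. `R(S-λ) ≠ H₁` and `R(T-μ) ≠ H₂`, then
`R((S-λ)⊗I) + R(I⊗(T-μ)) ≠ H₁ ⊗ H₂`, i.e. `(λ,μ) ∈ σ_δ(S⊗I, I⊗T)`. -/
theorem stmt_15 {H₁ H₂ Z : Type*}
    [NormedAddCommGroup H₁] [InnerProductSpace ℂ H₁] [CompleteSpace H₁]
    [NormedAddCommGroup H₂] [InnerProductSpace ℂ H₂] [CompleteSpace H₂]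
    [NormedAddCommGroup Z] [InnerProductSpace ℂ Z] [CompleteSpace Z]
    (tmul : H₁ →L[ℂ] H₂ →L[ℂ] Z)
    (omul : (H₁ →L[ℂ] H₁) →L[ℂ] (H₂ →L[ℂ] H₂) →L[ℂ] (Z →L[ℂ] Z))
    (hT1 : ∀ x y, ‖tmul x y‖ = ‖x‖ * ‖y‖)
    (hT2 : ∀ (T : H₁ →L[ℂ] H₁) (S : H₂ →L[ℂ] H₂) x y,
      omul T S (tmul x y) = tmul (T x) (S y))
    (hT3 : ∀ (T₁ T₂ : H₁ →L[ℂ] H₁) (S₁ S₂ : H₂ →L[ℂ] H₂),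
      (omul T₁ S₁).comp (omul T₂ S₂) = omul (T₁.comp T₂) (S₁.comp S₂))
    (hT3' : omul 1 1 = 1)
    (hT4a : ∀ (x : H₁) (u : H₁ →L[ℂ] ℂ),
      Set.range ⇑(omul (u.smulRight x) 1) ⊆ {z | ∃ y, z = tmul x y})
    (hT4b : ∀ (y : H₂) (v : H₂ →L[ℂ] ℂ),
      Set.range ⇑(omul 1 (v.smulRight y)) ⊆ {z | ∃ x, z = tmul x y})
    (hdense : Dense ((Submodule.span ℂ {z : Z | ∃ x y, z = tmul x y} : Submodule ℂ Z) : Set Z))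
    (S : H₁ →L[ℂ] H₁) (T : H₂ →L[ℂ] H₂) (lam mu : ℂ)
    (hS : LinearMap.range ((S - lam • 1 : H₁ →L[ℂ] H₁) : H₁ →ₗ[ℂ] H₁) ≠ ⊤)
    (hT : LinearMap.range ((T - mu • 1 : H₂ →L[ℂ] H₂) : H₂ →ₗ[ℂ] H₂) ≠ ⊤) :
    (LinearMap.range ((omul (S - lam • 1) 1 : Z →L[ℂ] Z) : Z →ₗ[ℂ] Z) ⊔
        LinearMap.range ((omul 1 (T - mu • 1) : Z →L[ℂ] Z) : Z →ₗ[ℂ] Z) :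
      Submodule ℂ Z) ≠ ⊤ := by
  intro hsum
  set A : H₁ →L[ℂ] H₁ := S - lam • 1 with hA
  set B : H₂ →L[ℂ] H₂ := T - mu • 1 with hB
  -- the coprod map is surjective; open mapping theorem
  set Φ : (Z × Z) →L[ℂ] Z := (omul A 1).coprod (omul 1 B) with hΦ
  have hsurj : Function.Surjective Φ := by
    intro z
    have hz : z ∈ LinearMap.range ((omul A 1 : Z →L[ℂ] Z) : Z →ₗ[ℂ] Z) ⊔ LinearMap.range ((omul 1 B : Z →L[ℂ] Z) : Z →ₗ[ℂ] Z) :=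
      hsum ▸ Submodule.mem_top
    obtain ⟨z₁, hz₁, z₂, hz₂, hzeq⟩ := Submodule.mem_sup.1 hz
    obtain ⟨w₁, rfl⟩ := hz₁
    obtain ⟨w₂, rfl⟩ := hz₂
    exact ⟨(w₁, w₂), by simpa [hΦ] using hzeq⟩
  obtain ⟨C, hC, hCspec⟩ := Φ.exists_preimage_norm_le hsurj
  set D : ℝ := ‖omul‖ with hD
  have hD0 : 0 ≤ D := by rw [hD]; exact norm_nonneg omul
  set ε : ℝ := 1 / (2 * (D * C + 1)) with hε
  have hDC : 0 ≤ D * C := mul_nonneg hD0 hC.le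
  have hεpos : 0 < ε := by
    rw [hε]; positivity
  have hεeq : 2 * (D * C + 1) * ε = 1 := by
    rw [hε]; field_simp
  obtain ⟨a, ha, haA⟩ := aux_small_adjoint A hS ε hεpos
  obtain ⟨b, hb, hbB⟩ := aux_small_adjoint B hT ε hεpos
  set u : H₁ →L[ℂ] ℂ := innerSL ℂ a with hu
  set v : H₂ →L[ℂ] ℂ := innerSL ℂ b with hv
  set z₀ : Z := tmul a b with hz₀
  have hz₀norm : ‖z₀‖ = 1 := by rw [hz₀, hT1, ha, hb, one_mul]
  -- rank-one sandwich operator fixes z₀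
  have hua : u a = 1 := by
    rw [hu]
    simp only [innerSL_apply_apply]
    rw [inner_self_eq_norm_sq_to_K, ha]
    norm_num
  have hvb : v b = 1 := by
    rw [hv]
    simp only [innerSL_apply_apply]
    rw [inner_self_eq_norm_sq_to_K, hb]
    norm_num
  have hEz : omul (u.smulRight a) (v.smulRight b) z₀ = z₀ := by
    rw [hz₀, hT2]
    simp [hua, hvb]
  -- composition identities
  have hcompA : ∀ (R : H₁ →L[ℂ] H₁), (u.smulRight a).comp R = (u.comp R).smulRight a := by
    intro R; ext x; simp
  have hcompB : ∀ (R : H₂ →L[ℂ] H₂), (v.smulRight b).comp R = (v.comp R).smulRight b := by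
    intro R; ext y; simp
  have hone₁ : (u.smulRight a).comp (1 : H₁ →L[ℂ] H₁) = u.smulRight a := by
    ext x; simp
  have hone₂ : (v.smulRight b).comp (1 : H₂ →L[ℂ] H₂) = v.smulRight b := by
    ext y; simp
  have hc1 : (omul (u.smulRight a) (v.smulRight b)).comp (omul A 1)
      = omul ((u.comp A).smulRight a) (v.smulRight b) := by
    rw [hT3, hcompA, hone₂]
  have hc2 : (omul (u.smulRight a) (v.smulRight b)).comp (omul 1 B)
      = omul (u.smulRight a) ((v.comp B).smulRight b) := by
    rw [hT3, hcompB, hone₁]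
  obtain ⟨p, hp, hpnorm⟩ := hCspec z₀
  have hp1 : ‖p.1‖ ≤ C := by
    have := norm_fst_le p
    rw [hz₀norm, mul_one] at hpnorm
    linarith
  have hp2 : ‖p.2‖ ≤ C := by
    have := norm_snd_le p
    rw [hz₀norm, mul_one] at hpnorm
    linarith
  -- the key identity
  have hΦp : (omul A 1) p.1 + (omul 1 B) p.2 = z₀ := by
    rw [← hp]; simp [hΦ]
  have hkey : z₀ = omul ((u.comp A).smulRight a) (v.smulRight b) p.1
      + omul (u.smulRight a) ((v.comp B).smulRight b) p.2 := by
    conv_lhs => rw [← hEz, ← hΦp]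
    rw [map_add, ← ContinuousLinearMap.comp_apply, ← ContinuousLinearMap.comp_apply, hc1, hc2]
  -- norm bounds
  have huA : u.comp A = innerSL ℂ (ContinuousLinearMap.adjoint A a) := by
    ext x
    simp [hu, ContinuousLinearMap.adjoint_inner_left]
  have hvB : v.comp B = innerSL ℂ (ContinuousLinearMap.adjoint B b) := by
    ext y
    simp [hv, ContinuousLinearMap.adjoint_inner_left]
  have hnu : ‖u‖ = 1 := by rw [hu, innerSL_apply_norm, ha]
  have hnv : ‖v‖ = 1 := by rw [hv, innerSL_apply_norm, hb]
  have hbound : ∀ (R₁ : H₁ →L[ℂ] H₁) (R₂ : H₂ →L[ℂ] H₂) (w : Z),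
      ‖omul R₁ R₂ w‖ ≤ D * ‖R₁‖ * ‖R₂‖ * ‖w‖ := by
    intro R₁ R₂ w
    calc ‖omul R₁ R₂ w‖ ≤ ‖omul R₁ R₂‖ * ‖w‖ := (omul R₁ R₂).le_opNorm w
    _ ≤ (D * ‖R₁‖ * ‖R₂‖) * ‖w‖ := by
        apply mul_le_mul_of_nonneg_right _ (norm_nonneg w)
        exact omul.le_opNorm₂ R₁ R₂
  have hn1 : ‖(u.comp A).smulRight a‖ = ‖ContinuousLinearMap.adjoint A a‖ := by
    rw [ContinuousLinearMap.norm_smulRight_apply, huA, innerSL_apply_norm, ha, mul_one]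
  have hn2 : ‖v.smulRight b‖ = 1 := by
    rw [ContinuousLinearMap.norm_smulRight_apply, hnv, hb, mul_one]
  have hn3 : ‖u.smulRight a‖ = 1 := by
    rw [ContinuousLinearMap.norm_smulRight_apply, hnu, ha, mul_one]
  have hn4 : ‖(v.comp B).smulRight b‖ = ‖ContinuousLinearMap.adjoint B b‖ := by
    rw [ContinuousLinearMap.norm_smulRight_apply, hvB, innerSL_apply_norm, hb, mul_one]
  have hterm1 : ‖omul ((u.comp A).smulRight a) (v.smulRight b) p.1‖
      ≤ D * ‖ContinuousLinearMap.adjoint A a‖ * C := by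
    have := hbound ((u.comp A).smulRight a) (v.smulRight b) p.1
    rw [hn1, hn2, mul_one] at this
    calc ‖omul ((u.comp A).smulRight a) (v.smulRight b) p.1‖
        ≤ D * ‖ContinuousLinearMap.adjoint A a‖ * ‖p.1‖ := this
      _ ≤ D * ‖ContinuousLinearMap.adjoint A a‖ * C := by
          apply mul_le_mul_of_nonneg_left hp1
          positivity
  have hterm2 : ‖omul (u.smulRight a) ((v.comp B).smulRight b) p.2‖
      ≤ D * ‖ContinuousLinearMap.adjoint B b‖ * C := by
    have := hbound (u.smulRight a) ((v.comp B).smulRight b) p.2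
    rw [hn3, hn4, mul_one] at this
    calc ‖omul (u.smulRight a) ((v.comp B).smulRight b) p.2‖
        ≤ D * ‖ContinuousLinearMap.adjoint B b‖ * ‖p.2‖ := this
      _ ≤ D * ‖ContinuousLinearMap.adjoint B b‖ * C := by
          apply mul_le_mul_of_nonneg_left hp2
          positivity
  have hfinal : (1:ℝ) ≤ D * ‖ContinuousLinearMap.adjoint A a‖ * C
      + D * ‖ContinuousLinearMap.adjoint B b‖ * C := by
    calc (1:ℝ) = ‖z₀‖ := hz₀norm.symm
      _ ≤ _ := by
          rw [hkey]
          exact (norm_add_le _ _).trans (add_le_add hterm1 hterm2)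
  have hlt1 : D * ‖ContinuousLinearMap.adjoint A a‖ * C ≤ D * C * ε := by
    have : D * ‖ContinuousLinearMap.adjoint A a‖ * C = (D * C) * ‖ContinuousLinearMap.adjoint A a‖ := by ring
    rw [this]
    exact mul_le_mul_of_nonneg_left haA.le hDC
  have hlt2 : D * ‖ContinuousLinearMap.adjoint B b‖ * C ≤ D * C * ε := by
    have : D * ‖ContinuousLinearMap.adjoint B b‖ * C = (D * C) * ‖ContinuousLinearMap.adjoint B b‖ := by ring
    rw [this]
    exact mul_le_mul_of_nonneg_left hbB.le hDC
  nlinarith [hεpos, hDC]
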